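/- For a single qubit state ρ, if U is drawn uniformly (Haar) from U(2) and s ∈ {0,1} is measured in the computational basis after applying U (with Born probability ⟨s|UρU†|s⟩), then the expectation of the matrix 3·U†|s⟩⟨s|U − I over both U and s equals ρ. -/

import Mathlib

/-!
Left invariance of `μ` lets one replace `U` by `V U` for any fixed unitary `V` without changing the
expectation. Averaging the estimator over `V ∈ {1, e^{iπ/4} H, e^{iπ/4} H S†}`, i.e. over the
measurements in the eigenbases of `Z`, `X` and `Y`, gives, pointwise in `U`, an expression in the
six Pauli eigenprojectors `P`. These form a projective 2-design:
`∑ P, tr (P Y) P = Y + tr Y • 1` for every `2 × 2` matrix `Y`. With `Y = U ρ U†` the average is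
exactly `ρ`, so the integral is `ρ`.
-/

open MeasureTheory Matrix
open scoped ComplexOrder

noncomputable section

instance : MeasurableSpace (Matrix (Fin 2) (Fin 2) ℂ) := by unfold Matrix; infer_instance

section BasisProjector

variable {n R : Type*} [Fintype n] [DecidableEq n] [CommRing R] [StarRing R]

def basisProjector (V : Matrix n n R) (s : n) : Matrix n n R := Vᴴ * single s s 1 * V

theorem diag_conj_eq_trace_basisProjector_mul (W A : Matrix n n R) (s : n) :
    (W * A * Wᴴ) s s = trace (basisProjector W s * A) := by
  rw [← one_smul R ((W * A * Wᴴ) s s), ← trace_single_mul, basisProjector, trace_mul_comm,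
    Matrix.mul_assoc, trace_mul_comm, ← Matrix.mul_assoc]

theorem basisProjector_mul (V U : Matrix n n R) (s : n) :
    basisProjector (V * U) s = Uᴴ * basisProjector V s * U := by
  simp only [basisProjector, conjTranspose_mul, Matrix.mul_assoc]

theorem sum_basisProjector {V : Matrix n n R} (hV : V ∈ unitaryGroup n R) :
    ∑ s, basisProjector V s = 1 := by
  simp only [basisProjector, ← Finset.sum_mul, ← Finset.mul_sum, sum_single_one, Matrix.mul_one,
    ← star_eq_conjTranspose, (mem_unitaryGroup_iff').mp hV]

theorem continuous_basisProjector [TopologicalSpace R] [IsTopologicalRing R] [ContinuousStar R]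
    (s : n) : Continuous fun V : Matrix n n R => basisProjector V s :=
  (continuous_id.matrix_conjTranspose.matrix_mul continuous_const).matrix_mul continuous_id

end BasisProjector

theorem isCompact_unitaryGroup {n 𝕜 : Type*} [Fintype n] [DecidableEq n] [RCLike 𝕜] :
    IsCompact (unitaryGroup n 𝕜 : Set (Matrix n n 𝕜)) := by
  have hclosed : IsClosed (unitaryGroup n 𝕜 : Set (Matrix n n 𝕜)) :=
    (isClosed_eq (by fun_prop) continuous_const).inter (isClosed_eq (by fun_prop) continuous_const)
  refine (isCompact_univ_pi fun _ => isCompact_univ_pi fun _ =>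
    isCompact_closedBall (0 : 𝕜) 1).of_isClosed_subset hclosed fun A hA i _ j _ => ?_
  simpa using entry_norm_bound_of_unitary hA i j

instance {n 𝕜 : Type*} [Fintype n] [DecidableEq n] [RCLike 𝕜] :
    CompactSpace (unitaryGroup n 𝕜) :=
  isCompact_iff_compactSpace.mp isCompact_unitaryGroup

instance : BorelSpace (Matrix (Fin 2) (Fin 2) ℂ) :=
  inferInstanceAs (BorelSpace (Fin 2 → Fin 2 → ℂ))

theorem card_smul_integral_eq_of_sum_mul_left_eq {G E ι : Type*} [Group G] [MeasurableSpace G]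
    [MeasurableMul G] [NormedAddCommGroup E] [NormedSpace ℝ E] [CompleteSpace E] [Fintype ι]
    {μ : Measure G} [IsProbabilityMeasure μ] [μ.IsMulLeftInvariant] {f : G → E}
    (hf : Integrable f μ) (g : ι → G) {c : E} (hc : ∀ x, ∑ k, f (g k * x) = c) :
    Fintype.card ι • ∫ x, f x ∂μ = c :=
  calc Fintype.card ι • ∫ x, f x ∂μ = ∑ k, ∫ x, f (g k * x) ∂μ := by
        simp only [integral_mul_left_eq_self, Finset.sum_const, Finset.card_univ]
    _ = ∫ x, ∑ k, f (g k * x) ∂μ :=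
        (integral_finsetSum _ fun k _ => hf.comp_mul_left (g k)).symm
    _ = c := integral_eq_const (.of_forall hc)

section PauliBases

open Complex

/-- `e^{iπ/4} H`, whose rows are the eigenvectors of `X`; the global phase makes every entry
`±(1 + i)/2`, so no `√2` appears. -/
def xBasisChange : Matrix (Fin 2) (Fin 2) ℂ := ((1 + I) / 2) • !![1, 1; 1, -1]

/-- `e^{iπ/4} H S†`, whose rows are the eigenvectors of `Y`. -/
def yBasisChange : Matrix (Fin 2) (Fin 2) ℂ := ((1 + I) / 2) • !![1, -I; 1, I]

theorem xBasisChange_mem_unitaryGroup : xBasisChange ∈ unitaryGroup (Fin 2) ℂ := by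
  rw [mem_unitaryGroup_iff']
  ext i j
  fin_cases i <;> fin_cases j <;>
    simp [xBasisChange, mul_apply, map_ofNat] <;> ring_nf <;> simp [I_sq] <;> ring_nf

theorem yBasisChange_mem_unitaryGroup : yBasisChange ∈ unitaryGroup (Fin 2) ℂ := by
  rw [mem_unitaryGroup_iff']
  ext i j
  fin_cases i <;> fin_cases j <;>
    simp [yBasisChange, mul_apply, map_ofNat] <;> ring_nf <;> simp [I_sq] <;> ring_nf

def pauliBasisChange : Fin 3 → unitaryGroup (Fin 2) ℂ :=
  ![1, ⟨xBasisChange, xBasisChange_mem_unitaryGroup⟩,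
    ⟨yBasisChange, yBasisChange_mem_unitaryGroup⟩]

theorem sum_pauliBasisChange_trace_smul_basisProjector (Y : Matrix (Fin 2) (Fin 2) ℂ) :
    ∑ b, ∑ s, trace (basisProjector (pauliBasisChange b : Matrix (Fin 2) (Fin 2) ℂ) s * Y) •
      basisProjector (pauliBasisChange b : Matrix (Fin 2) (Fin 2) ℂ) s = Y + trace Y • 1 := by
  ext i j
  fin_cases i <;> fin_cases j <;>
    simp [Fin.sum_univ_three, basisProjector, pauliBasisChange, xBasisChange, yBasisChange,
      trace, mul_apply, map_ofNat] <;> ring_nf <;> simp [I_sq] <;> ring_nf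

end PauliBases

section ShadowSnapshot

def shadowSnapshot (ρ U : Matrix (Fin 2) (Fin 2) ℂ) : Matrix (Fin 2) (Fin 2) ℂ :=
  ∑ s, trace (basisProjector U s * ρ) • ((3 : ℂ) • basisProjector U s - 1)

theorem shadowSnapshot_apply (ρ U : Matrix (Fin 2) (Fin 2) ℂ) (i j : Fin 2) :
    shadowSnapshot ρ U i j = ∑ s, (U * ρ * Uᴴ) s s *
      (((3 : ℂ) • (Uᴴ * single s s 1 * U) - 1 : Matrix (Fin 2) (Fin 2) ℂ) i j) := by
  simp only [shadowSnapshot, Matrix.sum_apply, Matrix.smul_apply, smul_eq_mul,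
    diag_conj_eq_trace_basisProjector_mul, basisProjector]

theorem continuous_shadowSnapshot (ρ : Matrix (Fin 2) (Fin 2) ℂ) :
    Continuous (shadowSnapshot ρ) :=
  continuous_finsetSum _ fun s _ =>
    ((continuous_basisProjector s).matrix_mul continuous_const).matrix_trace.smul
      ((continuous_sub_right 1).comp ((continuous_basisProjector s).const_smul (3 : ℂ)))

theorem shadowSnapshot_mul (ρ U : Matrix (Fin 2) (Fin 2) ℂ) {V : Matrix (Fin 2) (Fin 2) ℂ}
    (hV : V ∈ unitaryGroup (Fin 2) ℂ) :
    shadowSnapshot ρ (V * U) =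
      (3 : ℂ) • (Uᴴ * (∑ s, trace (basisProjector V s * (U * ρ * Uᴴ)) • basisProjector V s) *
        U) - trace (U * ρ * Uᴴ) • 1 := by
  have htrace (s : Fin 2) :
      trace (basisProjector (V * U) s * ρ) = trace (basisProjector V s * (U * ρ * Uᴴ)) := by
    rw [basisProjector_mul, Matrix.mul_assoc, Matrix.mul_assoc, trace_mul_comm, Matrix.mul_assoc,
      Matrix.mul_assoc]
  have hsum : ∑ s, trace (basisProjector V s * (U * ρ * Uᴴ)) = trace (U * ρ * Uᴴ) := by
    rw [← trace_sum, ← Finset.sum_mul, sum_basisProjector hV, Matrix.one_mul]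
  simp only [shadowSnapshot, htrace]
  simp only [basisProjector_mul, smul_sub, Finset.sum_sub_distrib, ← Finset.sum_smul, hsum]
  congr 1
  simp only [Matrix.mul_sum, Matrix.sum_mul, Finset.smul_sum, Matrix.mul_smul, Matrix.smul_mul,
    smul_comm (3 : ℂ)]

theorem sum_shadowSnapshot_pauliBasisChange_mul (ρ : Matrix (Fin 2) (Fin 2) ℂ)
    (U : unitaryGroup (Fin 2) ℂ) :
    ∑ b, shadowSnapshot ρ ↑(pauliBasisChange b * U) = (3 : ℂ) • ρ := by
  have hUU : (U : Matrix (Fin 2) (Fin 2) ℂ)ᴴ * U = 1 := (mem_unitaryGroup_iff').mp U.2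
  have hconj :
      (U : Matrix (Fin 2) (Fin 2) ℂ)ᴴ * (U * ρ * (U : Matrix (Fin 2) (Fin 2) ℂ)ᴴ) * U = ρ := by
    rw [← Matrix.mul_assoc, ← Matrix.mul_assoc, hUU, Matrix.one_mul, Matrix.mul_assoc, hUU,
      Matrix.mul_one]
  simp only [UnitaryGroup.mul_val, fun b => shadowSnapshot_mul ρ (U : Matrix (Fin 2) (Fin 2) ℂ)
    (pauliBasisChange b).2]
  rw [Finset.sum_sub_distrib, ← Finset.smul_sum, ← Finset.sum_mul, ← Finset.mul_sum,
    sum_pauliBasisChange_trace_smul_basisProjector, Matrix.mul_add, Matrix.add_mul, hconj,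
    Matrix.mul_smul, Matrix.smul_mul, Matrix.mul_one, hUU, Finset.sum_const, Finset.card_univ,
    Fintype.card_fin]
  module

end ShadowSnapshot

theorem shadow_unbiased_haar
    (ρ : Matrix (Fin 2) (Fin 2) ℂ)
    (μ : Measure (Matrix.unitaryGroup (Fin 2) ℂ)) [IsProbabilityMeasure μ]
    (hHaar : ∀ V : Matrix.unitaryGroup (Fin 2) ℂ, μ.map (fun U => V * U) = μ) :
    ∀ i j : Fin 2,
      (∫ U : Matrix.unitaryGroup (Fin 2) ℂ,
        ∑ s : Fin 2,
          (((U : Matrix (Fin 2) (Fin 2) ℂ) * ρ * (U : Matrix (Fin 2) (Fin 2) ℂ)ᴴ) s s *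
            (((3 : ℂ) • ((U : Matrix (Fin 2) (Fin 2) ℂ)ᴴ * Matrix.single s s 1 *
              (U : Matrix (Fin 2) (Fin 2) ℂ)) - 1 : Matrix (Fin 2) (Fin 2) ℂ) i j)) ∂μ) = ρ i j := by
  have : μ.IsMulLeftInvariant := ⟨hHaar⟩
  intro i j
  simp_rw [← shadowSnapshot_apply]
  have hint : Integrable (fun U : unitaryGroup (Fin 2) ℂ => shadowSnapshot ρ U i j) μ :=
    (((continuous_shadowSnapshot ρ).comp continuous_subtype_val).matrix_elem i j
      ).integrable_of_hasCompactSupport (.of_compactSpace _)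
  have h := card_smul_integral_eq_of_sum_mul_left_eq hint pauliBasisChange fun U => by
    rw [← Matrix.sum_apply, sum_shadowSnapshot_pauliBasisChange_mul, Matrix.smul_apply]
  rw [Fintype.card_fin, nsmul_eq_mul, smul_eq_mul] at h
  exact mul_left_cancel₀ three_ne_zero (by exact_mod_cast h)
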